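/- Gaussian stability under normal distortion (CDF case): Let μ ∈ ℝ, σ > 0, p₀ ∈ (0,1), γ ∈ (0,1]. Let F(x) = Φ((x−μ)/σ) be the CDF of a Gaussian with mean μ and standard deviation σ. Then for all x ∈ ℝ, w_{p₀,γ}(F(x)) = Φ((x − μ̂)/σ̂), where μ̂ = μ − σ(γ⁻¹ − 1)Φ⁻¹(p₀) and σ̂ = σ/γ. That is, the distorted CDF is the CDF of a Gaussian with mean μ̂ and standard deviation σ̂. -/

import Mathlib

open Real MeasureTheory ProbabilityTheory Set Filter

/-- Standard normal CDF. -/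
noncomputable def Phi (x : ℝ) : ℝ :=
  ∫ t in Set.Iic x, Real.exp (-t ^ 2 / 2) / Real.sqrt (2 * Real.pi)

/-- Standard normal quantile function (inverse of `Phi`). -/
noncomputable def PhiInv : ℝ → ℝ := Function.invFun Phi

/-- Standard normal density. -/
noncomputable def ndens (x : ℝ) : ℝ :=
  Real.exp (-x ^ 2 / 2) / Real.sqrt (2 * Real.pi)

/-- Normal distortion function. -/
noncomputable def wdist (p₀ γ p : ℝ) : ℝ :=
  Phi (γ * PhiInv p + (1 - γ) * PhiInv p₀)

/-!
Since `Phi` is strictly increasing, `PhiInv ∘ Phi = id`, so on the probability scale `Phi y`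
the distortion acts as the affine map `y ↦ γ y + (1 - γ) Φ⁻¹(p₀)`. Composing it with the
standardisation `x ↦ (x - μ) / σ` gives another affine map, the standardisation for `μ̂, σ̂`.
-/

lemma integrable_ndens : Integrable ndens := by
  convert (integrable_exp_neg_mul_sq (b := 1 / 2) (by norm_num)).div_const
    (Real.sqrt (2 * Real.pi)) using 2 with t
  rw [ndens]
  ring_nf

lemma Phi_sub_Phi (a b : ℝ) : Phi b - Phi a = ∫ t in a..b, ndens t :=
  intervalIntegral.integral_Iic_sub_Iic integrable_ndens.integrableOn integrable_ndens.integrableOn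

lemma Phi_strictMono : StrictMono Phi := fun a b hab => by
  have hpos : 0 < ∫ t in a..b, ndens t :=
    intervalIntegral.intervalIntegral_pos_of_pos_on integrable_ndens.intervalIntegrable
      (fun t _ => by rw [ndens]; positivity) hab
  linarith [Phi_sub_Phi a b]

lemma PhiInv_Phi (y : ℝ) : PhiInv (Phi y) = y :=
  Function.leftInverse_invFun Phi_strictMono.injective y

lemma wdist_Phi (p₀ γ y : ℝ) : wdist p₀ γ (Phi y) = Phi (γ * y + (1 - γ) * PhiInv p₀) := by
  rw [wdist, PhiInv_Phi]

theorem stmt7_general (μ σ p₀ γ : ℝ) (hσ : 0 < σ)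
    (hγ : γ ∈ Set.Ioc (0:ℝ) 1) :
    ∀ x : ℝ,
      wdist p₀ γ (Phi ((x - μ) / σ)) =
        Phi ((x - (μ - σ * (γ⁻¹ - 1) * PhiInv p₀)) / (σ / γ)) := by
  intro x
  rw [wdist_Phi]
  congr 1
  have hγ₀ : γ ≠ 0 := hγ.1.ne'
  field_simp
  ring

theorem stmt7 (μ σ p₀ γ : ℝ) (hσ : 0 < σ)
    (hp₀ : p₀ ∈ Set.Ioo (0:ℝ) 1) (hγ : γ ∈ Set.Ioc (0:ℝ) 1) :
    ∀ x : ℝ,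
      wdist p₀ γ (Phi ((x - μ) / σ)) =
        Phi ((x - (μ - σ * (γ⁻¹ - 1) * PhiInv p₀)) / (σ / γ)) :=
  stmt7_general μ σ p₀ γ hσ hγ
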